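/- For every integer m ≥ 1, the ℝ-linear map T_m : H^ℝ_{m+2} × H^ℝ_{m+1} → H_m, T_m(f, φ) = D²f − 2Dφ, is surjective. -/

import Mathlib

open MvPolynomial

/-- `H^ℝ_k`: the real-linear subspace of homogeneous polynomials of degree `k`
in the two variables `z, w` (here `w` plays the role of `z̄`) whose coefficients
satisfy `a_{ij} = conj a_{ji}`; these are the polynomials taking real values
when `w = z̄`. -/
noncomputable def HR (k : ℕ) : Submodule ℝ (MvPolynomial (Fin 2) ℂ) where
  carrier := {p | p.IsHomogeneous k ∧
    ∀ i j : ℕ, coeff (Finsupp.single 0 i + Finsupp.single 1 j) p =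
      starRingEnd ℂ (coeff (Finsupp.single 0 j + Finsupp.single 1 i) p)}
  add_mem' := by
    rintro p q ⟨hp1, hp2⟩ ⟨hq1, hq2⟩
    refine ⟨hp1.add hq1, fun i j => ?_⟩
    simp only [coeff_add, map_add, hp2 i j, hq2 i j]
  zero_mem' := by
    refine ⟨isHomogeneous_zero _ _ _, fun i j => by simp⟩
  smul_mem' := by
    rintro r p ⟨hp1, hp2⟩
    refine ⟨fun {d} hd => hp1 (fun h => hd ?_), fun i j => ?_⟩
    · rw [coeff_smul, h, smul_zero]
    · rw [coeff_smul, coeff_smul, hp2 i j]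
      simp [Complex.real_smul, map_mul, Complex.conj_ofReal]

/-- The ℝ-linear map `T_m(f, φ) = D²f − 2Dφ`, where `D = ∂/∂z`, defined on
`H^ℝ_{m+2} × H^ℝ_{m+1}` (with values a priori in the whole polynomial ring;
they in fact lie in `H_m`). -/
noncomputable def Tm (m : ℕ) :
    (HR (m + 2) × HR (m + 1)) →ₗ[ℝ] MvPolynomial (Fin 2) ℂ where
  toFun p := pderiv 0 (pderiv 0 (p.1 : MvPolynomial (Fin 2) ℂ))
    - 2 * pderiv 0 ((p.2 : MvPolynomial (Fin 2) ℂ))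
  map_add' p q := by
    simp only [Prod.fst_add, Prod.snd_add, Submodule.coe_add, map_add]
    ring
  map_smul' r p := by
    have h : ∀ q : MvPolynomial (Fin 2) ℂ,
        r • q = C ((algebraMap ℝ ℂ) r) * q := fun q => by
      rw [algebra_compatible_smul ℂ r q, smul_eq_C_mul]
    simp only [Prod.smul_fst, Prod.smul_snd, Submodule.coe_smul,
      RingHom.id_apply, h, pderiv_C_mul]
    ring


section Aux

open Finsupp

/-- Shorthand for the monomial `c · z^a w^b`. -/
noncomputable def Mon (a b : ℕ) (c : ℂ) : MvPolynomial (Fin 2) ℂ :=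
  monomial (Finsupp.single 0 a + Finsupp.single 1 b) c

lemma single2_inj {a b i j : ℕ} :
    Finsupp.single (0 : Fin 2) a + Finsupp.single 1 b =
      Finsupp.single 0 i + Finsupp.single 1 j ↔ a = i ∧ b = j := by
  constructor
  · intro h
    constructor
    · have := DFunLike.congr_fun h 0; simpa using this
    · have := DFunLike.congr_fun h 1; simpa using this
  · rintro ⟨rfl, rfl⟩; rfl

lemma deg2 (a b : ℕ) : (Finsupp.single (0 : Fin 2) a + Finsupp.single 1 b).degree = a + b := by
  rw [Finsupp.degree_eq_weight_one, map_add]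
  simp [Finsupp.weight_apply, Finsupp.sum_single_index]

lemma sub2 (a b : ℕ) : (Finsupp.single (0 : Fin 2) a + Finsupp.single 1 b) - Finsupp.single 0 1
    = Finsupp.single 0 (a - 1) + Finsupp.single 1 b := by
  ext i; fin_cases i <;> simp [Finsupp.single_apply]

lemma app2 (a b : ℕ) :
    ((Finsupp.single (0 : Fin 2) a + Finsupp.single 1 b : Fin 2 →₀ ℕ)) 0 = a := by
  simp [Finsupp.single_apply]

lemma fin2_decomp (d : Fin 2 →₀ ℕ) :
    d = Finsupp.single 0 (d 0) + Finsupp.single 1 (d 1) := by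
  ext i; fin_cases i <;> simp [Finsupp.single_apply]

lemma pderiv_Mon (a b : ℕ) (c : ℂ) : pderiv 0 (Mon a b c) = Mon (a - 1) b (c * a) := by
  rw [Mon, pderiv_monomial, sub2, app2, Mon]

lemma Mon_isHomogeneous (a b : ℕ) (c : ℂ) : (Mon a b c).IsHomogeneous (a + b) :=
  isHomogeneous_monomial c (deg2 a b)

lemma Mon_neg (a b : ℕ) (c : ℂ) : Mon a b (-c) = -(Mon a b c) := by
  simp [Mon]

lemma Mon_zero (a b : ℕ) : Mon a b 0 = 0 := map_zero _

lemma C_mul_Mon (r : ℂ) (a b : ℕ) (c : ℂ) : C r * Mon a b c = Mon a b (r * c) := by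
  rw [Mon, Mon, C_mul_monomial]

lemma div_mul_mul_cancel' {x y c : ℂ} (hx : x ≠ 0) (hy : y ≠ 0) :
    c / (x * y) * x * y = c := by
  field_simp

lemma coeff_Mon (a b i j : ℕ) (c : ℂ) :
    coeff (Finsupp.single 0 i + Finsupp.single 1 j) (Mon a b c) =
      if a = i ∧ b = j then c else 0 := by
  rw [Mon, coeff_monomial]
  congr 1
  simp [single2_inj]

lemma pd_homog {p : MvPolynomial (Fin 2) ℂ} {n : ℕ} (h : p.IsHomogeneous (n + 1)) :
    (pderiv 0 p).IsHomogeneous n := by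
  rw [p.as_sum, map_sum]
  apply MvPolynomial.IsHomogeneous.sum
  intro d hd
  rw [pderiv_monomial]
  rcases Nat.eq_zero_or_pos (d 0) with h0 | h0
  · rw [h0]
    simpa using isHomogeneous_zero (Fin 2) ℂ n
  · apply isHomogeneous_monomial
    have hdeg : d.degree = n + 1 := by
      rw [Finsupp.degree_eq_weight_one]
      exact h (MvPolynomial.mem_support_iff.mp hd)
    have h1 : d 0 + d 1 = n + 1 := by
      rw [fin2_decomp d, deg2] at hdeg
      simpa using hdeg
    rw [fin2_decomp d, sub2, deg2]
    omega

lemma genHR (a b : ℕ) (c : ℂ) :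
    Mon a b c + Mon b a ((starRingEnd ℂ) c) ∈ HR (a + b) := by
  constructor
  · exact (Mon_isHomogeneous a b c).add (by rw [add_comm a b]; exact Mon_isHomogeneous b a _)
  · intro i j
    simp only [coeff_add, coeff_Mon]
    rw [map_add, apply_ite (starRingEnd ℂ), apply_ite (starRingEnd ℂ)]
    simp only [map_zero, RingHomCompTriple.comp_apply, RingHom.id_apply]
    rw [add_comm]
    congr 1 <;> (congr 1; simp [and_comm, eq_comm])

lemma Tm_apply (m : ℕ) (p : HR (m + 2) × HR (m + 1)) :
    Tm m p = pderiv 0 (pderiv 0 (p.1 : MvPolynomial (Fin 2) ℂ))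
      - 2 * pderiv 0 ((p.2 : MvPolynomial (Fin 2) ℂ)) := rfl

lemma QQ {m a b : ℕ} (h : a + b = m) (c : ℂ) :
    Mon a b (c * (a + 2 : ℕ) * (a + 1 : ℕ)) +
      Mon (b - 2) (a + 2) ((starRingEnd ℂ) c * (b : ℕ) * (b - 1 : ℕ)) ∈
      LinearMap.range (Tm m) := by
  have hF : Mon (a + 2) b c + Mon b (a + 2) ((starRingEnd ℂ) c) ∈ HR (m + 2) := by
    have := genHR (a + 2) b c
    rwa [show a + 2 + b = m + 2 by omega] at this
  refine ⟨(⟨_, hF⟩, 0), ?_⟩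
  rw [Tm_apply]
  simp only [ZeroMemClass.coe_zero, map_zero, mul_zero, sub_zero]
  rw [map_add, pderiv_Mon, pderiv_Mon, map_add, pderiv_Mon, pderiv_Mon]
  rw [show a + 2 - 1 = a + 1 by omega, show a + 1 - 1 = a by omega,
    show b - 1 - 1 = b - 2 by omega]

lemma PP {m a b : ℕ} (h : a + b = m) (c : ℂ) :
    Mon a b (c * (a + 1 : ℕ)) +
      Mon (b - 1) (a + 1) ((starRingEnd ℂ) c * (b : ℕ)) ∈
      LinearMap.range (Tm m) := by
  have hF : Mon (a + 1) b (-c / 2) + Mon b (a + 1) ((starRingEnd ℂ) (-c / 2)) ∈ HR (m + 1) := by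
    have := genHR (a + 1) b (-c / 2)
    rwa [show a + 1 + b = m + 1 by omega] at this
  refine ⟨(0, ⟨_, hF⟩), ?_⟩
  rw [Tm_apply]
  simp only [ZeroMemClass.coe_zero, map_zero, zero_sub]
  rw [map_add, pderiv_Mon, pderiv_Mon]
  rw [show a + 1 - 1 = a by omega]
  rw [show (2 : MvPolynomial (Fin 2) ℂ) = C 2 from (map_ofNat C 2).symm, mul_add,
    C_mul_Mon, C_mul_Mon, neg_add, ← Mon_neg, ← Mon_neg]
  have hconj : (starRingEnd ℂ) (-c / 2) = -((starRingEnd ℂ) c) / 2 := by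
    rw [map_div₀, map_neg, Complex.conj_ofNat]
  rw [hconj]
  congr 1 <;> (congr 1; ring)

lemma mon_mem_range (m : ℕ) (hm : 1 ≤ m) :
    ∀ t, t ≤ m → ∀ c : ℂ, Mon (m - t) t c ∈ LinearMap.range (Tm m) := by
  intro t
  induction t using Nat.strong_induction_on with
  | _ t IH =>
    intro ht c
    match t with
    | 0 =>
      have h := QQ (a := m) (b := 0) (m := m) (by omega) (c / ((m + 2) * (m + 1) : ℕ))
      have e1 : Mon m 0 ((c / ((m + 2) * (m + 1) : ℕ) : ℂ) * (m + 2 : ℕ) * (m + 1 : ℕ))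
          = Mon (m - 0) 0 c := by
        rw [Nat.sub_zero]
        congr 1
        have h1 : ((m + 2 : ℕ) : ℂ) ≠ 0 := by exact_mod_cast (by omega : (m + 2 : ℕ) ≠ 0)
        have h2 : ((m + 1 : ℕ) : ℂ) ≠ 0 := by exact_mod_cast (by omega : (m + 1 : ℕ) ≠ 0)
        rw [Nat.cast_mul]
        exact div_mul_mul_cancel' h1 h2
      rw [e1] at h
      simpa [Mon_zero] using h
    | 1 =>
      have h := QQ (a := m - 1) (b := 1) (m := m) (by omega) (c / ((m - 1 + 2) * (m - 1 + 1) : ℕ))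
      have e1 : Mon (m - 1) 1 ((c / ((m - 1 + 2) * (m - 1 + 1) : ℕ) : ℂ) * (m - 1 + 2 : ℕ)
          * (m - 1 + 1 : ℕ)) = Mon (m - 1) 1 c := by
        congr 1
        have h1 : ((m - 1 + 2 : ℕ) : ℂ) ≠ 0 := by exact_mod_cast (by omega : (m - 1 + 2 : ℕ) ≠ 0)
        have h2 : ((m - 1 + 1 : ℕ) : ℂ) ≠ 0 := by exact_mod_cast (by omega : (m - 1 + 1 : ℕ) ≠ 0)
        rw [Nat.cast_mul]
        exact div_mul_mul_cancel' h1 h2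
      rw [e1] at h
      simpa [Mon_zero] using h
    | (t' + 2) =>
      set n := m - t' with hn
      have hn2 : 2 ≤ n := by omega
      have hcn : ((n : ℕ) : ℂ) ≠ 0 := by exact_mod_cast (by omega : n ≠ 0)
      have hcn1 : ((n - 1 : ℕ) : ℂ) ≠ 0 := by exact_mod_cast (by omega : n - 1 ≠ 0)
      have hct : ((t' + 1 : ℕ) : ℂ) ≠ 0 := by exact_mod_cast (by omega : t' + 1 ≠ 0)
      -- first generator
      set c2 : ℂ := (starRingEnd ℂ) (c / ((n * (n - 1) : ℕ) : ℂ)) with hc2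
      set e : ℂ := c2 * ((t' + 2 : ℕ) : ℂ) * ((t' + 1 : ℕ) : ℂ) with he
      have h1 := QQ (a := t') (b := n) (m := m) (by omega) c2
      have e1 : Mon (n - 2) (t' + 2) ((starRingEnd ℂ) c2 * (n : ℕ) * (n - 1 : ℕ))
          = Mon (m - (t' + 2)) (t' + 2) c := by
        rw [show n - 2 = m - (t' + 2) by omega]
        congr 1
        rw [hc2, RingHomCompTriple.comp_apply, RingHom.id_apply, Nat.cast_mul]
        exact div_mul_mul_cancel' hcn hcn1
      rw [e1] at h1
      -- second generator
      set c1 : ℂ := (starRingEnd ℂ) (-e / ((t' + 1 : ℕ) : ℂ)) with hc1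
      have h2 := PP (a := m - (t' + 1)) (b := t' + 1) (m := m) (by omega) c1
      have e2 : Mon (t' + 1 - 1) (m - (t' + 1) + 1) ((starRingEnd ℂ) c1 * ((t' + 1 : ℕ) : ℂ))
          = Mon t' n (-e) := by
        rw [show t' + 1 - 1 = t' by omega, show m - (t' + 1) + 1 = n by omega]
        congr 1
        rw [hc1, RingHomCompTriple.comp_apply, RingHom.id_apply]
        exact div_mul_cancel₀ _ hct
      rw [e2] at h2
      -- inductive element
      have h3 := IH (t' + 1) (by omega) (by omega) (c1 * ((m - (t' + 1) + 1 : ℕ) : ℂ))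
      have hsum := Submodule.sub_mem _ (Submodule.add_mem _ h1 h2) h3
      have key : Mon t' n e + Mon (m - (t' + 2)) (t' + 2) c +
          (Mon (m - (t' + 1)) (t' + 1) (c1 * ((m - (t' + 1) + 1 : ℕ) : ℂ)) + Mon t' n (-e)) -
          Mon (m - (t' + 1)) (t' + 1) (c1 * ((m - (t' + 1) + 1 : ℕ) : ℂ))
          = Mon (m - (t' + 2)) (t' + 2) c := by
        rw [Mon_neg]
        ring
      rwa [key] at hsum

end Aux

/-- for every `m ≥ 1`, the ℝ-linear map
`T_m : H^ℝ_{m+2} × H^ℝ_{m+1} → H_m`, `T_m(f, φ) = D²f − 2Dφ`, is surjective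
onto the space `H_m` of homogeneous polynomials of degree `m`. -/
theorem stmt7 (m : ℕ) (hm : 1 ≤ m) :
    LinearMap.range (Tm m) =
      Submodule.restrictScalars ℝ (homogeneousSubmodule (Fin 2) ℂ m) := by
  apply le_antisymm
  · rintro x ⟨⟨f, phi⟩, rfl⟩
    show Tm m (f, phi) ∈ homogeneousSubmodule (Fin 2) ℂ m
    rw [mem_homogeneousSubmodule, Tm_apply]
    have hf : (f : MvPolynomial (Fin 2) ℂ).IsHomogeneous (m + 2) := f.2.1
    have hphi : (phi : MvPolynomial (Fin 2) ℂ).IsHomogeneous (m + 1) := phi.2.1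
    have hd2 : (pderiv 0 (pderiv 0 (f : MvPolynomial (Fin 2) ℂ))).IsHomogeneous m :=
      pd_homog (pd_homog hf)
    have hd1 : (pderiv 0 ((phi : MvPolynomial (Fin 2) ℂ))).IsHomogeneous m := pd_homog hphi
    have h2 : ((2 : MvPolynomial (Fin 2) ℂ) * pderiv 0
        ((phi : MvPolynomial (Fin 2) ℂ))).IsHomogeneous m := by
      have h' := (isHomogeneous_C (Fin 2) (2 : ℂ)).mul hd1
      rw [zero_add] at h'
      rwa [map_ofNat] at h'
    exact hd2.sub h2
  · intro p hp
    have hp' : MvPolynomial.IsHomogeneous p m := hp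
    rw [p.as_sum]
    apply Submodule.sum_mem
    intro d hd
    have hdeg : d 0 + d 1 = m := by
      have h1 : d.degree = m := by
        rw [Finsupp.degree_eq_weight_one]
        exact hp' (MvPolynomial.mem_support_iff.mp hd)
      rw [fin2_decomp d, deg2] at h1
      simpa using h1
    have e1 : (monomial d (coeff d p) : MvPolynomial (Fin 2) ℂ)
        = Mon (d 0) (d 1) (coeff d p) := by
      rw [Mon, ← fin2_decomp d]
    rw [e1, show d 0 = m - d 1 by omega]
    exact mon_mem_range m hm (d 1) (by omega) _
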